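/- arXiv:2402.16899 — 4 statements merged into one kernel-verified Lean document; each statement's English description precedes it below -/
import Mathlib

section
/- For any two residual networks f(·,θ_1) of size (d, m_1, D_1, L) and f(·,θ_2) of size (d, m_2, D_2, L), there exists a residual network f(·,θ_3) of size (d, m_1 + m_2, D_1 + D_2, L) such that f(x,θ_3) = f(x,θ_1) + f(x,θ_2) for all x ∈ ℝ^d, and ‖θ_3‖_P = ‖θ_1‖_P + ‖θ_2‖_P. -/
open MeasureTheory Finset Set ENNReal

noncomputable section

/-- The ReLU activation function. -/
def relu (x : ℝ) : ℝ := max x 0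

/-- Parameters of a residual network of size `(d, m, D, L)`. -/
structure ResNet (d m D L : ℕ) where
  u : Fin D → ℝ
  V : Matrix (Fin D) (Fin d) ℝ
  W : Fin L → Matrix (Fin m) (Fin D) ℝ
  Umat : Fin L → Matrix (Fin D) (Fin m) ℝ

namespace ResNet

variable {d m D L : ℕ}

/-- Hidden layers `h^[l]` of the residual network. -/
def hidden (θ : ResNet d m D L) (x : Fin d → ℝ) : ℕ → (Fin D → ℝ)
  | 0 => θ.V.mulVec x
  | l + 1 =>
    if h : l < L then
      hidden θ x l +
        (θ.Umat ⟨l, h⟩).mulVec (fun j => relu ((θ.W ⟨l, h⟩).mulVec (hidden θ x l) j))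
    else hidden θ x l

/-- Output `f(x, θ) = uᵀ h^[L]` of the residual network. -/
def apply (θ : ResNet d m D L) (x : Fin d → ℝ) : ℝ := ∑ i, θ.u i * θ.hidden x L i

/-- Matrix products `(I + 3|U^[l]||W^[l]|) ⋯ (I + 3|U^[1]||W^[1]|) |V|` used in the
weighted path norm. -/
def pathMat (θ : ResNet d m D L) : ℕ → Matrix (Fin D) (Fin d) ℝ
  | 0 => θ.V.map abs
  | l + 1 =>
    if h : l < L then
      (1 + (3 : ℝ) • ((θ.Umat ⟨l, h⟩).map abs * (θ.W ⟨l, h⟩).map abs)) * pathMat θ l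
    else pathMat θ l

/-- Weighted path norm `‖θ‖_P`. -/
def pathNorm (θ : ResNet d m D L) : ℝ :=
  ∑ j, Matrix.vecMul (fun i => |θ.u i|) (θ.pathMat L) j

end ResNet

/-- Weighted path norm of a family of residual networks. -/
def pathNormFam {d m D L k : ℕ} (Θ : Fin k → ResNet d m D L) : ℝ := ∑ a, (Θ a).pathNorm

/-- `ρ` is a Barron representation of `h` on `S`. -/
def IsBarronRep (d : ℕ) (S : Set (Fin d → ℝ)) (h : (Fin d → ℝ) → ℝ)
    (ρ : Measure (ℝ × (Fin d → ℝ))) : Prop :=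
  IsProbabilityMeasure ρ ∧ ∀ x ∈ S, h x = ∫ p, p.1 * relu (∑ i, p.2 i * x i) ∂ρ

/-- `h` belongs to the Barron space on `S`. -/
def InBarron (d : ℕ) (S : Set (Fin d → ℝ)) (h : (Fin d → ℝ) → ℝ) : Prop :=
  ∃ ρ, IsBarronRep d S h ρ

/-- The Barron norm of a real-valued function on `S`. -/
def barronNorm (d : ℕ) (S : Set (Fin d → ℝ)) (h : (Fin d → ℝ) → ℝ) : ℝ :=
  sInf { c | ∃ ρ, IsBarronRep d S h ρ ∧
    c = Real.sqrt (∫ p, |p.1| * (∑ i, |p.2 i|) ^ 2 ∂ρ) }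

/-- The Barron norm of a family `r(·, a)`, `a ∈ A`. -/
def famBarronNorm (d k : ℕ) (S : Set (Fin d → ℝ)) (r : (Fin d → ℝ) → Fin k → ℝ) : ℝ :=
  Real.sqrt (∑ a, (barronNorm d S fun s => r s a) ^ 2)

/-- Bellman loss `½ E_{s∼μ, a∼U}[(f(s,θ(a)) − r(s,a) − γ max_{a'} f(next(s,a),θ(a')))²]`,
with `U` the uniform distribution over the `k` actions. -/
def bellmanLoss {d m Dh L : ℕ} (k : ℕ) (γ : ℝ) (μ : Measure (Fin d → ℝ))
    (r : (Fin d → ℝ) → Fin k → ℝ) (next : (Fin d → ℝ) → Fin k → (Fin d → ℝ))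
    (Θ : Fin k → ResNet d m Dh L) : ℝ :=
  (1 / (2 * (k : ℝ))) *
    ∑ a, ∫ s, ((Θ a).apply s - r s a - γ * ⨆ a', (Θ a').apply (next s a)) ^ 2 ∂μ

/-- Empirical Bellman loss over a sample `z_i = (s_i, a_i)` with `s_i' = next s_i a_i`. -/
def empBellmanLoss {d m Dh L : ℕ} (k n : ℕ) (γ : ℝ)
    (r : (Fin d → ℝ) → Fin k → ℝ) (z : Fin n → (Fin d → ℝ) × Fin k)
    (next : (Fin d → ℝ) → Fin k → (Fin d → ℝ)) (Θ : Fin k → ResNet d m Dh L) : ℝ :=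
  (1 / (2 * (n : ℝ))) *
    ∑ i, ((Θ (z i).2).apply (z i).1 - r (z i).1 (z i).2
      - γ * ⨆ a', (Θ a').apply (next (z i).1 (z i).2)) ^ 2

/-- Uniform probability measure on `Fin k`. -/
def uniformFin (k : ℕ) : Measure (Fin k) := (k : ℝ≥0∞)⁻¹ • Measure.count

/-- Law of the i.i.d. sample `(s_i, a_i)_{i=1}^n` with `(s_i, a_i) ∼ μ × U`. -/
def sampleMeasure (d k n : ℕ) (μ : Measure (Fin d → ℝ)) :
    Measure (Fin n → (Fin d → ℝ) × Fin k) :=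
  Measure.pi fun _ => μ.prod (uniformFin k)

/-- Rademacher sign of a boolean. -/
def signB (b : Bool) : ℝ := if b then 1 else -1

/-- Uniform measure on `Bool`. -/
def uniformBool : Measure Bool := (2 : ℝ≥0∞)⁻¹ • Measure.count

/-- Law of `n` i.i.d. Rademacher variables. -/
def radMeasure (n : ℕ) : Measure (Fin n → Bool) := Measure.pi fun _ => uniformBool

section ResNetCombAux

namespace ResNetCombAux

variable {a b c e f g : ℕ}

/-- Stack two matrices with the same column type vertically. -/
def rowapp (A : Matrix (Fin a) (Fin c) ℝ) (B : Matrix (Fin b) (Fin c) ℝ) :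
    Matrix (Fin (a + b)) (Fin c) ℝ :=
  fun i j => Fin.addCases (fun i₁ => A i₁ j) (fun i₂ => B i₂ j) i

/-- Block-diagonal combination of two matrices. -/
def blk (A : Matrix (Fin a) (Fin c) ℝ) (B : Matrix (Fin b) (Fin e) ℝ) :
    Matrix (Fin (a + b)) (Fin (c + e)) ℝ :=
  fun i j =>
    Fin.addCases (fun i₁ => Fin.addCases (fun j₁ => A i₁ j₁) (fun _ => 0) j)
      (fun i₂ => Fin.addCases (fun _ => 0) (fun j₂ => B i₂ j₂) j) i

@[simp] lemma rowapp_left (A : Matrix (Fin a) (Fin c) ℝ) (B : Matrix (Fin b) (Fin c) ℝ)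
    (i : Fin a) (j : Fin c) : rowapp A B (Fin.castAdd b i) j = A i j := by
  simp [rowapp]

@[simp] lemma rowapp_right (A : Matrix (Fin a) (Fin c) ℝ) (B : Matrix (Fin b) (Fin c) ℝ)
    (i : Fin b) (j : Fin c) : rowapp A B (Fin.natAdd a i) j = B i j := by
  simp [rowapp]

@[simp] lemma blk_ll (A : Matrix (Fin a) (Fin c) ℝ) (B : Matrix (Fin b) (Fin e) ℝ)
    (i : Fin a) (j : Fin c) : blk A B (Fin.castAdd b i) (Fin.castAdd e j) = A i j := by
  simp [blk]

@[simp] lemma blk_lr (A : Matrix (Fin a) (Fin c) ℝ) (B : Matrix (Fin b) (Fin e) ℝ)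
    (i : Fin a) (j : Fin e) : blk A B (Fin.castAdd b i) (Fin.natAdd c j) = 0 := by
  simp [blk]

@[simp] lemma blk_rl (A : Matrix (Fin a) (Fin c) ℝ) (B : Matrix (Fin b) (Fin e) ℝ)
    (i : Fin b) (j : Fin c) : blk A B (Fin.natAdd a i) (Fin.castAdd e j) = 0 := by
  simp [blk]

@[simp] lemma blk_rr (A : Matrix (Fin a) (Fin c) ℝ) (B : Matrix (Fin b) (Fin e) ℝ)
    (i : Fin b) (j : Fin e) : blk A B (Fin.natAdd a i) (Fin.natAdd c j) = B i j := by
  simp [blk]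

lemma blk_mul_rowapp (A : Matrix (Fin a) (Fin c) ℝ) (B : Matrix (Fin b) (Fin e) ℝ)
    (C : Matrix (Fin c) (Fin f) ℝ) (E : Matrix (Fin e) (Fin f) ℝ) :
    blk A B * rowapp C E = rowapp (A * C) (B * E) := by
  ext i j
  refine Fin.addCases (fun i₁ => ?_) (fun i₂ => ?_) i <;>
    simp [Matrix.mul_apply, Fin.sum_univ_add]

lemma blk_mul_blk (A : Matrix (Fin a) (Fin c) ℝ) (B : Matrix (Fin b) (Fin e) ℝ)
    (C : Matrix (Fin c) (Fin f) ℝ) (E : Matrix (Fin e) (Fin g) ℝ) :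
    blk A B * blk C E = blk (A * C) (B * E) := by
  ext i j
  refine Fin.addCases (fun i₁ => ?_) (fun i₂ => ?_) i <;>
    refine Fin.addCases (fun j₁ => ?_) (fun j₂ => ?_) j <;>
    simp [Matrix.mul_apply, Fin.sum_univ_add]

lemma one_eq_blk : (1 : Matrix (Fin (a + b)) (Fin (a + b)) ℝ) = blk 1 1 := by
  ext i j
  refine Fin.addCases (fun i₁ => ?_) (fun i₂ => ?_) i <;>
    refine Fin.addCases (fun j₁ => ?_) (fun j₂ => ?_) j <;>
    simp [Matrix.one_apply, Fin.ext_iff] <;> omega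

lemma blk_add (A C : Matrix (Fin a) (Fin c) ℝ) (B E : Matrix (Fin b) (Fin e) ℝ) :
    blk A B + blk C E = blk (A + C) (B + E) := by
  ext i j
  refine Fin.addCases (fun i₁ => ?_) (fun i₂ => ?_) i <;>
    refine Fin.addCases (fun j₁ => ?_) (fun j₂ => ?_) j <;> simp

lemma blk_smul (r : ℝ) (A : Matrix (Fin a) (Fin c) ℝ) (B : Matrix (Fin b) (Fin e) ℝ) :
    r • blk A B = blk (r • A) (r • B) := by
  ext i j
  refine Fin.addCases (fun i₁ => ?_) (fun i₂ => ?_) i <;>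
    refine Fin.addCases (fun j₁ => ?_) (fun j₂ => ?_) j <;> simp

lemma blk_map_abs (A : Matrix (Fin a) (Fin c) ℝ) (B : Matrix (Fin b) (Fin e) ℝ) :
    (blk A B).map abs = blk (A.map abs) (B.map abs) := by
  ext i j
  refine Fin.addCases (fun i₁ => ?_) (fun i₂ => ?_) i <;>
    refine Fin.addCases (fun j₁ => ?_) (fun j₂ => ?_) j <;> simp

lemma rowapp_map_abs (A : Matrix (Fin a) (Fin c) ℝ) (B : Matrix (Fin b) (Fin c) ℝ) :
    (rowapp A B).map abs = rowapp (A.map abs) (B.map abs) := by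
  ext i j
  refine Fin.addCases (fun i₁ => ?_) (fun i₂ => ?_) i <;> simp

lemma rowapp_mulVec (A : Matrix (Fin a) (Fin c) ℝ) (B : Matrix (Fin b) (Fin c) ℝ)
    (x : Fin c → ℝ) :
    (rowapp A B).mulVec x = fun i => Fin.addCases (A.mulVec x) (B.mulVec x) i := by
  ext i
  refine Fin.addCases (fun i₁ => ?_) (fun i₂ => ?_) i <;>
    simp [Matrix.mulVec, dotProduct]

lemma blk_mulVec (A : Matrix (Fin a) (Fin c) ℝ) (B : Matrix (Fin b) (Fin e) ℝ)
    (v : Fin c → ℝ) (w : Fin e → ℝ) :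
    (blk A B).mulVec (fun j => Fin.addCases v w j)
      = fun i => Fin.addCases (A.mulVec v) (B.mulVec w) i := by
  ext i
  refine Fin.addCases (fun i₁ => ?_) (fun i₂ => ?_) i <;>
    simp [Matrix.mulVec, dotProduct, Fin.sum_univ_add]

end ResNetCombAux

open ResNetCombAux

def comb {d m₁ m₂ D₁ D₂ L : ℕ} (θ₁ : ResNet d m₁ D₁ L) (θ₂ : ResNet d m₂ D₂ L) :
    ResNet d (m₁ + m₂) (D₁ + D₂) L where
  u := fun i => Fin.addCases θ₁.u θ₂.u i
  V := rowapp θ₁.V θ₂.V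
  W := fun l => blk (θ₁.W l) (θ₂.W l)
  Umat := fun l => blk (θ₁.Umat l) (θ₂.Umat l)

@[simp] lemma comb_u {d m₁ m₂ D₁ D₂ L : ℕ} (θ₁ : ResNet d m₁ D₁ L) (θ₂ : ResNet d m₂ D₂ L) :
    (comb θ₁ θ₂).u = fun i => Fin.addCases θ₁.u θ₂.u i := rfl

@[simp] lemma comb_V {d m₁ m₂ D₁ D₂ L : ℕ} (θ₁ : ResNet d m₁ D₁ L) (θ₂ : ResNet d m₂ D₂ L) :
    (comb θ₁ θ₂).V = rowapp θ₁.V θ₂.V := rfl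

@[simp] lemma comb_W {d m₁ m₂ D₁ D₂ L : ℕ} (θ₁ : ResNet d m₁ D₁ L) (θ₂ : ResNet d m₂ D₂ L)
    (l : Fin L) : (comb θ₁ θ₂).W l = blk (θ₁.W l) (θ₂.W l) := rfl

@[simp] lemma comb_Umat {d m₁ m₂ D₁ D₂ L : ℕ} (θ₁ : ResNet d m₁ D₁ L)
    (θ₂ : ResNet d m₂ D₂ L) (l : Fin L) :
    (comb θ₁ θ₂).Umat l = blk (θ₁.Umat l) (θ₂.Umat l) := rfl

lemma comb_hidden {d m₁ m₂ D₁ D₂ L : ℕ} (θ₁ : ResNet d m₁ D₁ L) (θ₂ : ResNet d m₂ D₂ L)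
    (x : Fin d → ℝ) (l : ℕ) :
    (comb θ₁ θ₂).hidden x l = fun i => Fin.addCases (θ₁.hidden x l) (θ₂.hidden x l) i := by
  induction l with
  | zero => simpa [ResNet.hidden] using rowapp_mulVec θ₁.V θ₂.V x
  | succ l ih =>
    by_cases h : l < L
    · have hrelu : (fun j => relu ((blk (θ₁.W ⟨l, h⟩) (θ₂.W ⟨l, h⟩)).mulVec
          ((comb θ₁ θ₂).hidden x l) j))
          = fun j => Fin.addCases
              (fun j₁ => relu ((θ₁.W ⟨l, h⟩).mulVec (θ₁.hidden x l) j₁))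
              (fun j₂ => relu ((θ₂.W ⟨l, h⟩).mulVec (θ₂.hidden x l) j₂)) j := by
        funext j
        rw [ih, blk_mulVec]
        refine Fin.addCases (fun j₁ => ?_) (fun j₂ => ?_) j <;> simp
      funext i
      simp only [ResNet.hidden, dif_pos h, comb_W, comb_Umat] at hrelu ⊢
      rw [hrelu, blk_mulVec, ih]
      refine Fin.addCases (fun i₁ => ?_) (fun i₂ => ?_) i <;> simp
    · funext i
      simp only [ResNet.hidden, dif_neg h]
      rw [ih]

lemma comb_pathMat {d m₁ m₂ D₁ D₂ L : ℕ} (θ₁ : ResNet d m₁ D₁ L) (θ₂ : ResNet d m₂ D₂ L)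
    (l : ℕ) :
    (comb θ₁ θ₂).pathMat l = rowapp (θ₁.pathMat l) (θ₂.pathMat l) := by
  induction l with
  | zero => simpa [ResNet.pathMat] using rowapp_map_abs θ₁.V θ₂.V
  | succ l ih =>
    by_cases h : l < L
    · simp only [ResNet.pathMat, dif_pos h, comb_W, comb_Umat, ih]
      rw [blk_map_abs, blk_map_abs, blk_mul_blk, one_eq_blk, blk_smul, blk_add,
        blk_mul_rowapp]
    · simp only [ResNet.pathMat, dif_neg h, ih]

theorem comb_apply {d m₁ m₂ D₁ D₂ L : ℕ} (θ₁ : ResNet d m₁ D₁ L) (θ₂ : ResNet d m₂ D₂ L)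
    (x : Fin d → ℝ) : (comb θ₁ θ₂).apply x = θ₁.apply x + θ₂.apply x := by
  simp only [ResNet.apply, comb_hidden, comb_u, Fin.sum_univ_add, Fin.addCases_left,
    Fin.addCases_right]

theorem comb_pathNorm {d m₁ m₂ D₁ D₂ L : ℕ} (θ₁ : ResNet d m₁ D₁ L)
    (θ₂ : ResNet d m₂ D₂ L) :
    (comb θ₁ θ₂).pathNorm = θ₁.pathNorm + θ₂.pathNorm := by
  simp only [ResNet.pathNorm, comb_pathMat, Matrix.vecMul, dotProduct, comb_u,
    Fin.sum_univ_add, Fin.addCases_left, Fin.addCases_right, rowapp_left, rowapp_right,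
    Finset.sum_add_distrib]


end ResNetCombAux

/-- combination of residual networks (Lemma: combination of residual network). -/
theorem resnet_combination {d m₁ m₂ D₁ D₂ L : ℕ}
    (θ₁ : ResNet d m₁ D₁ L) (θ₂ : ResNet d m₂ D₂ L) :
    ∃ θ₃ : ResNet d (m₁ + m₂) (D₁ + D₂) L,
      (∀ x : Fin d → ℝ, θ₃.apply x = θ₁.apply x + θ₂.apply x) ∧
      θ₃.pathNorm = θ₁.pathNorm + θ₂.pathNorm :=
  ⟨comb θ₁ θ₂, comb_apply θ₁ θ₂, comb_pathNorm θ₁ θ₂⟩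

end
end

section
/- For any residual network f(·,θ) of any size (d,m,D,L) and any s ∈ [0,1]^d, the output is bounded by the weighted path norm: |f(s,θ)| ≤ ‖θ‖_P. -/
open MeasureTheory Finset Set ENNReal

noncomputable section

/-- the output of a residual network on `[0,1]^d` is bounded by its
weighted path norm. -/
theorem resnet_output_le_pathNorm {d m D L : ℕ} (θ : ResNet d m D L)
    (s : Fin d → ℝ) (hs : s ∈ Set.Icc (0 : Fin d → ℝ) 1) :
    |θ.apply s| ≤ θ.pathNorm := by
  -- nonnegativity of pathMat entries
  have hP : ∀ l i j, 0 ≤ θ.pathMat l i j := by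
    intro l
    induction l with
    | zero => intro i j; simp [ResNet.pathMat, Matrix.map_apply, abs_nonneg]
    | succ l ih =>
      intro i j
      by_cases h : l < L
      · simp only [ResNet.pathMat, dif_pos h, Matrix.mul_apply]
        refine Finset.sum_nonneg fun k _ => mul_nonneg ?_ (ih k j)
        simp only [Matrix.add_apply, Matrix.smul_apply, Matrix.one_apply, Matrix.mul_apply,
          smul_eq_mul]
        have : (0:ℝ) ≤ ∑ t, (θ.Umat ⟨l, h⟩).map abs i t * (θ.W ⟨l, h⟩).map abs t k :=
          Finset.sum_nonneg fun t _ => mul_nonneg (abs_nonneg _) (abs_nonneg _)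
        positivity
      · simpa [ResNet.pathMat, dif_neg h] using ih i j
  -- key bound on hidden layers
  have key : ∀ l i, |θ.hidden s l i| ≤ ∑ j, θ.pathMat l i j := by
    intro l
    induction l with
    | zero =>
      intro i
      simp only [ResNet.hidden, ResNet.pathMat, Matrix.mulVec, dotProduct,
        Matrix.map_apply]
      calc |∑ j, θ.V i j * s j| ≤ ∑ j, |θ.V i j * s j| := Finset.abs_sum_le_sum_abs _ _
        _ ≤ ∑ j, |θ.V i j| := by
          refine Finset.sum_le_sum fun j _ => ?_
          rw [abs_mul]
          have h0 : 0 ≤ s j := hs.1 j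
          have h1 : s j ≤ 1 := hs.2 j
          calc |θ.V i j| * |s j| ≤ |θ.V i j| * 1 := by
                exact mul_le_mul_of_nonneg_left (by rw [abs_of_nonneg h0]; exact h1)
                  (abs_nonneg _)
            _ = |θ.V i j| := mul_one _
    | succ l ih =>
      intro i
      by_cases h : l < L
      · have hrelu : ∀ k, |relu ((θ.W ⟨l, h⟩).mulVec (θ.hidden s l) k)| ≤
            ∑ j, |θ.W ⟨l, h⟩ k j| * ∑ t, θ.pathMat l j t := by
          intro k
          have h1 : |relu ((θ.W ⟨l, h⟩).mulVec (θ.hidden s l) k)| ≤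
              |(θ.W ⟨l, h⟩).mulVec (θ.hidden s l) k| := by
            unfold relu
            rcases le_or_gt ((θ.W ⟨l, h⟩).mulVec (θ.hidden s l) k) 0 with hc | hc
            · simp [max_eq_right hc, abs_nonneg]
            · rw [max_eq_left hc.le]
          refine h1.trans ?_
          simp only [Matrix.mulVec, dotProduct]
          calc |∑ j, θ.W ⟨l, h⟩ k j * θ.hidden s l j|
              ≤ ∑ j, |θ.W ⟨l, h⟩ k j * θ.hidden s l j| := Finset.abs_sum_le_sum_abs _ _
            _ ≤ ∑ j, |θ.W ⟨l, h⟩ k j| * ∑ t, θ.pathMat l j t := by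
                refine Finset.sum_le_sum fun j _ => ?_
                rw [abs_mul]
                exact mul_le_mul_of_nonneg_left (ih j) (abs_nonneg _)
        have step : |θ.hidden s (l+1) i| ≤ (∑ j, θ.pathMat l i j) +
            ∑ k, |θ.Umat ⟨l, h⟩ i k| * ∑ j, |θ.W ⟨l, h⟩ k j| * ∑ t, θ.pathMat l j t := by
          simp only [ResNet.hidden, dif_pos h, Pi.add_apply]
          refine (abs_add_le _ _).trans (add_le_add (ih i) ?_)
          simp only [Matrix.mulVec, dotProduct]
          calc |∑ k, θ.Umat ⟨l, h⟩ i k * relu (∑ j, θ.W ⟨l, h⟩ k j * θ.hidden s l j)|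
              ≤ ∑ k, |θ.Umat ⟨l, h⟩ i k * relu (∑ j, θ.W ⟨l, h⟩ k j * θ.hidden s l j)| :=
                Finset.abs_sum_le_sum_abs _ _
            _ ≤ ∑ k, |θ.Umat ⟨l, h⟩ i k| * ∑ j, |θ.W ⟨l, h⟩ k j| * ∑ t, θ.pathMat l j t := by
                refine Finset.sum_le_sum fun k _ => ?_
                rw [abs_mul]
                refine mul_le_mul_of_nonneg_left ?_ (abs_nonneg _)
                simpa [Matrix.mulVec, dotProduct] using hrelu k
        have hmatdef : θ.pathMat (l+1) = θ.pathMat l +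
            (3:ℝ) • (((θ.Umat ⟨l, h⟩).map abs * (θ.W ⟨l, h⟩).map abs) * θ.pathMat l) := by
          simp only [ResNet.pathMat, dif_pos h]
          rw [Matrix.add_mul, Matrix.one_mul, Matrix.smul_mul]
        have hS : ∑ t, (((θ.Umat ⟨l, h⟩).map abs * (θ.W ⟨l, h⟩).map abs) * θ.pathMat l) i t
            = ∑ k, |θ.Umat ⟨l, h⟩ i k| * ∑ j, |θ.W ⟨l, h⟩ k j| * ∑ t, θ.pathMat l j t := by
          simp only [Matrix.mul_apply, Matrix.map_apply, Finset.sum_mul, Finset.mul_sum]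
          rw [Finset.sum_comm]
          refine Eq.trans (Finset.sum_congr rfl fun y _ => Finset.sum_comm) ?_
          rw [Finset.sum_comm]
          refine Finset.sum_congr rfl fun k _ => Finset.sum_congr rfl fun j _ =>
            Finset.sum_congr rfl fun t _ => by ring
        have hSnn : (0:ℝ) ≤ ∑ k, |θ.Umat ⟨l, h⟩ i k| * ∑ j, |θ.W ⟨l, h⟩ k j| *
            ∑ t, θ.pathMat l j t := by
          refine Finset.sum_nonneg fun k _ => mul_nonneg (abs_nonneg _) ?_
          refine Finset.sum_nonneg fun j _ => mul_nonneg (abs_nonneg _) ?_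
          exact Finset.sum_nonneg fun t _ => hP l j t
        have target : (∑ j, θ.pathMat l i j) +
            ∑ k, |θ.Umat ⟨l, h⟩ i k| * ∑ j, |θ.W ⟨l, h⟩ k j| * ∑ t, θ.pathMat l j t ≤
            ∑ j, θ.pathMat (l+1) i j := by
          rw [hmatdef]
          simp only [Matrix.add_apply, Matrix.smul_apply, smul_eq_mul]
          rw [Finset.sum_add_distrib]
          refine add_le_add le_rfl ?_
          rw [← Finset.mul_sum, hS]
          nlinarith [hSnn]
        exact le_trans step target
      · simp only [ResNet.hidden, dif_neg h, ResNet.pathMat]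
        exact ih i
  -- conclude
  have hpn : θ.pathNorm = ∑ i, |θ.u i| * ∑ j, θ.pathMat L i j := by
    unfold ResNet.pathNorm
    simp only [Matrix.vecMul, dotProduct]
    rw [Finset.sum_comm]
    congr 1; ext i; rw [Finset.mul_sum]
  rw [hpn]
  unfold ResNet.apply
  calc |∑ i, θ.u i * θ.hidden s L i| ≤ ∑ i, |θ.u i * θ.hidden s L i| :=
        Finset.abs_sum_le_sum_abs _ _
    _ ≤ ∑ i, |θ.u i| * ∑ j, θ.pathMat L i j := by
        refine Finset.sum_le_sum fun i _ => ?_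
        rw [abs_mul]
        exact mul_le_mul_of_nonneg_left (key L i) (abs_nonneg _)

end
end

section
/- Every residual network f(·,θ) of any size (d,m,D,L) is Lipschitz with respect to the ℓ∞ norm with Lipschitz constant at most its weighted path norm: for all s, s̃ ∈ ℝ^d, |f(s,θ) − f(s̃,θ)| ≤ ‖θ‖_P·‖s − s̃‖_∞. -/
open MeasureTheory Finset Set ENNReal

noncomputable section

lemma relu_lip (a b : ℝ) : |relu a - relu b| ≤ |a - b| :=
  abs_max_sub_max_le_abs a b 0

lemma pathMat_nonneg {d m D L : ℕ} (θ : ResNet d m D L) (l : ℕ) :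
    ∀ i j, 0 ≤ θ.pathMat l i j := by
  induction l with
  | zero =>
    intro i j
    simp only [ResNet.pathMat, Matrix.map_apply]
    exact abs_nonneg _
  | succ l ih =>
    intro i j
    rw [ResNet.pathMat]
    split_ifs with h
    · rw [Matrix.mul_apply]
      refine Finset.sum_nonneg fun k _ => mul_nonneg ?_ (ih k j)
      rw [Matrix.add_apply, Matrix.smul_apply, Matrix.mul_apply]
      have h1 : (0:ℝ) ≤ (1 : Matrix (Fin D) (Fin D) ℝ) i k := by
        by_cases hik : i = k <;> simp [Matrix.one_apply, hik]
      have h2 : (0:ℝ) ≤ ∑ p, ((θ.Umat ⟨l,h⟩).map abs) i p * ((θ.W ⟨l,h⟩).map abs) p k :=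
        Finset.sum_nonneg fun p _ => mul_nonneg
          (by simp [Matrix.map_apply]) (by simp [Matrix.map_apply])
      have h3 : (0:ℝ) ≤ ((3:ℝ) • ((θ.Umat ⟨l,h⟩).map abs * (θ.W ⟨l,h⟩).map abs)
          : Matrix (Fin D) (Fin D) ℝ) i k := by
        rw [Matrix.smul_apply, Matrix.mul_apply, smul_eq_mul]
        positivity
      rw [Matrix.smul_apply, Matrix.mul_apply] at h3
      exact add_nonneg h1 h3
    · exact ih i j

lemma hidden_diff {d m D L : ℕ} (θ : ResNet d m D L) (s s' : Fin d → ℝ)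
    (ε : ℝ) (hε0 : 0 ≤ ε) (hε : ∀ j, |s j - s' j| ≤ ε) (l : ℕ) :
    ∀ i, |θ.hidden s l i - θ.hidden s' l i| ≤ ∑ j, θ.pathMat l i j * ε := by
  induction l with
  | zero =>
    intro i
    simp only [ResNet.hidden, ResNet.pathMat, Matrix.mulVec, dotProduct,
      Matrix.map_apply]
    rw [← Finset.sum_sub_distrib]
    calc |∑ j, (θ.V i j * s j - θ.V i j * s' j)|
        ≤ ∑ j, |θ.V i j * s j - θ.V i j * s' j| := Finset.abs_sum_le_sum_abs _ _
      _ ≤ ∑ j, |θ.V i j| * ε := by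
          refine Finset.sum_le_sum fun j _ => ?_
          rw [← mul_sub, abs_mul]
          exact mul_le_mul_of_nonneg_left (hε j) (abs_nonneg _)
  | succ l ih =>
    intro i
    rw [ResNet.hidden, ResNet.hidden, ResNet.pathMat]
    split_ifs with h
    · set U := θ.Umat ⟨l, h⟩
      set W := θ.W ⟨l, h⟩
      set P := θ.pathMat l
      set hs := θ.hidden s l
      set hs' := θ.hidden s' l
      have hAnn : ∀ k, 0 ≤ ∑ q, P k q * ε := fun k =>
        Finset.sum_nonneg fun q _ => mul_nonneg (pathMat_nonneg θ l k q) hε0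
      have step1 : |(hs i + U.mulVec (fun j => relu (W.mulVec hs j)) i)
            - (hs' i + U.mulVec (fun j => relu (W.mulVec hs' j)) i)|
          ≤ (∑ q, P i q * ε) + ∑ j, |U i j| * ∑ k, |W j k| * ∑ q, P k q * ε := by
        have habs : ∀ j, |relu (W.mulVec hs j) - relu (W.mulVec hs' j)|
            ≤ ∑ k, |W j k| * ∑ q, P k q * ε := by
          intro j
          refine (relu_lip _ _).trans ?_
          simp only [Matrix.mulVec, dotProduct]
          rw [← Finset.sum_sub_distrib]
          calc |∑ k, (W j k * hs k - W j k * hs' k)|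
              ≤ ∑ k, |W j k * hs k - W j k * hs' k| := Finset.abs_sum_le_sum_abs _ _
            _ ≤ ∑ k, |W j k| * ∑ q, P k q * ε := by
                refine Finset.sum_le_sum fun k _ => ?_
                rw [← mul_sub, abs_mul]
                exact mul_le_mul_of_nonneg_left (ih k) (abs_nonneg _)
        have e1 : (hs i + U.mulVec (fun j => relu (W.mulVec hs j)) i)
            - (hs' i + U.mulVec (fun j => relu (W.mulVec hs' j)) i)
            = (hs i - hs' i)
              + ∑ j, U i j * (relu (W.mulVec hs j) - relu (W.mulVec hs' j)) := by
          simp only [Matrix.mulVec, dotProduct, mul_sub]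
          rw [Finset.sum_sub_distrib]
          ring
        rw [e1]
        refine (abs_add_le _ _).trans (add_le_add ((ih i)) ?_)
        calc |∑ j, U i j * (relu (W.mulVec hs j) - relu (W.mulVec hs' j))|
            ≤ ∑ j, |U i j * (relu (W.mulVec hs j) - relu (W.mulVec hs' j))| :=
              Finset.abs_sum_le_sum_abs _ _
          _ ≤ ∑ j, |U i j| * ∑ k, |W j k| * ∑ q, P k q * ε := by
              refine Finset.sum_le_sum fun j _ => ?_
              rw [abs_mul]
              exact mul_le_mul_of_nonneg_left (habs j) (abs_nonneg _)
      refine step1.trans ?_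
      have hmat : ((1 + (3 : ℝ) • (U.map abs * W.map abs) : Matrix (Fin D) (Fin D) ℝ) * P)
          = P + (3:ℝ) • (U.map abs * W.map abs * P) := by
        rw [Matrix.add_mul, Matrix.one_mul, Matrix.smul_mul]
      rw [hmat]
      simp only [Matrix.add_apply, Matrix.smul_apply, smul_eq_mul, add_mul,
        Finset.sum_add_distrib]
      have eL : ∑ q, (U.map abs * W.map abs * P) i q * ε
          = ∑ k, (U.map abs * W.map abs) i k * ∑ q, P k q * ε := by
        simp only [Matrix.mul_apply, Matrix.map_apply, Finset.sum_mul, Finset.mul_sum,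
          mul_assoc]
        exact Finset.sum_comm
      have eR : ∑ j, |U i j| * ∑ k, |W j k| * ∑ q, P k q * ε
          = ∑ k, (U.map abs * W.map abs) i k * ∑ q, P k q * ε := by
        simp only [Matrix.mul_apply, Matrix.map_apply, Finset.mul_sum, Finset.sum_mul,
          mul_assoc]
        rw [Finset.sum_comm]
        exact Finset.sum_congr rfl fun k _ => Finset.sum_comm
      have hS : 0 ≤ ∑ k, (U.map abs * W.map abs) i k * ∑ q, P k q * ε := by
        rw [← eR]
        exact Finset.sum_nonneg fun j _ => mul_nonneg (abs_nonneg _)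
          (Finset.sum_nonneg fun k _ => mul_nonneg (abs_nonneg _) (hAnn k))
      have e3 : ∑ q, 3 * (U.map abs * W.map abs * P) i q * ε
          = 3 * ∑ k, (U.map abs * W.map abs) i k * ∑ q, P k q * ε := by
        rw [← eL, Finset.mul_sum]
        exact Finset.sum_congr rfl fun q _ => by ring
      rw [e3, eR]
      linarith
    · exact ih i

/-- a residual network is Lipschitz in the `ℓ∞` norm with constant at most
its weighted path norm.  (The norm on `Fin d → ℝ` is the sup norm.) -/
theorem resnet_lipschitz {d m D L : ℕ} (θ : ResNet d m D L) (s s' : Fin d → ℝ) :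
    |θ.apply s - θ.apply s'| ≤ θ.pathNorm * ‖s - s'‖ := by
  have hε0 : (0:ℝ) ≤ ‖s - s'‖ := norm_nonneg _
  have hε : ∀ j, |s j - s' j| ≤ ‖s - s'‖ := by
    intro j
    have := norm_le_pi_norm (s - s') j
    simpa [Real.norm_eq_abs] using this
  have key := hidden_diff θ s s' ‖s - s'‖ hε0 hε L
  rw [ResNet.apply, ResNet.apply, ← Finset.sum_sub_distrib]
  calc |∑ i, (θ.u i * θ.hidden s L i - θ.u i * θ.hidden s' L i)|
      ≤ ∑ i, |θ.u i * θ.hidden s L i - θ.u i * θ.hidden s' L i| :=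
        Finset.abs_sum_le_sum_abs _ _
    _ ≤ ∑ i, |θ.u i| * ∑ j, θ.pathMat L i j * ‖s - s'‖ := by
        refine Finset.sum_le_sum fun i _ => ?_
        rw [← mul_sub, abs_mul]
        exact mul_le_mul_of_nonneg_left (key i) (abs_nonneg _)
    _ = θ.pathNorm * ‖s - s'‖ := by
        rw [ResNet.pathNorm, Finset.sum_mul]
        simp only [Matrix.vecMul, dotProduct, Finset.sum_mul, Finset.mul_sum,
          mul_assoc]
        exact Finset.sum_comm

end
end

section
/- Let S ⊆ [0,1]^d, let A be a nonempty finite action set, γ ∈ (0,1), Δt ∈ (0,1), and let g̃ : S × A × [0,∞) → S satisfy g̃(s,a,0) = s and the time-Lipschitz condition ‖g̃(s,a,t) − g̃(s,a,t+Δ)‖_∞ ≤ C_T·Δ for some C_T > 0 and all s ∈ S, a ∈ A, t ≥ 0, Δ ∈ (0,1). Let r : S × A → ℝ be bounded measurable, D a probability measure on S, and U the uniform distribution on A. Then for every family Θ = {θ(a)}_{a∈A} of residual-network parameters of a common size (d,m,D',L), the Bellman optimal loss and Bellman effective loss satisfy R_D(Θ) ≤ 2·R̃_D(Θ) + γ²·C_T²·(Δt)²·‖Θ‖_P².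 -/
open MeasureTheory Finset Set ENNReal

noncomputable section

/-!
The two losses differ only in where the max-term is evaluated: at `g̃(s,a,Δt)` or at `s`, and
`‖s - g̃(s,a,Δt)‖ ≤ C_T Δt` since `g̃(s,a,0) = s`. A residual network is Lipschitz in the sup norm
with constant its weighted path norm: ReLU is 1-Lipschitz, so a residual block maps a difference
`δ` of inputs to one bounded entrywise by `(I + |U||W|)|δ| ≤ (I + 3|U||W|)|δ|`. Hence the max
over actions is `‖Θ‖_P`-Lipschitz, the two Bellman residuals differ pointwise by at most
`γ ‖Θ‖_P C_T Δt`, and integrating `x² ≤ 2 y² + 2 (x - y)²` gives the bound.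
-/

namespace Matrix

variable {R ι κ : Type*} [Ring R] [LinearOrder R] [IsStrictOrderedRing R] [Fintype κ]

theorem abs_mulVec_le (M : Matrix ι κ R) (v : κ → R) : |M *ᵥ v| ≤ M.map abs *ᵥ |v| := fun i =>
  calc |∑ j, M i j * v j| ≤ ∑ j, |M i j * v j| := Finset.abs_sum_le_sum_abs _ _
    _ = (M.map abs *ᵥ |v|) i := by simp only [abs_mul]; rfl

theorem mulVec_mono_of_nonneg {M : Matrix ι κ R} (hM : ∀ i j, 0 ≤ M i j) {v w : κ → R}
    (h : v ≤ w) : M *ᵥ v ≤ M *ᵥ w := fun i =>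
  dotProduct_le_dotProduct_of_nonneg_left h (hM i)

theorem abs_dotProduct_le (v w : κ → R) : |v ⬝ᵥ w| ≤ |v| ⬝ᵥ |w| :=
  (Finset.abs_sum_le_sum_abs _ _).trans_eq (by simp only [abs_mul]; rfl)

theorem map_abs_mul_map_abs_nonneg {μ : Type*} [Fintype μ] (A : Matrix ι κ R)
    (B : Matrix κ μ R) (i : ι) (j : μ) : 0 ≤ (A.map abs * B.map abs) i j :=
  Finset.sum_nonneg fun _ _ => mul_nonneg (abs_nonneg _) (abs_nonneg _)

theorem one_add_smul_apply_nonneg [DecidableEq ι] {M : Matrix ι ι R} (hM : ∀ i j, 0 ≤ M i j)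
    {c : R} (hc : 0 ≤ c) (i j : ι) : 0 ≤ (1 + c • M) i j := by
  rw [add_apply, smul_apply, one_apply]
  exact add_nonneg (by split_ifs <;> norm_num) (smul_nonneg hc (hM i j))

end Matrix

theorem abs_relu_sub_relu_le {ι : Type*} (v w : ι → ℝ) :
    |(fun j => relu (v j)) - fun j => relu (w j)| ≤ |v - w| := fun j =>
  abs_max_sub_max_le_abs (v j) (w j) 0

open Matrix in
theorem abs_residualBlock_sub_le {ι κ : Type*} [Fintype ι] [Fintype κ] [DecidableEq ι]
    (U : Matrix ι κ ℝ) (W : Matrix κ ι ℝ) (h h' : ι → ℝ) :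
    |(h + U *ᵥ fun j => relu ((W *ᵥ h) j)) - (h' + U *ᵥ fun j => relu ((W *ᵥ h') j))|
      ≤ (1 + U.map abs * W.map abs) *ᵥ |h - h'| :=
  calc _ = |(h - h') + U *ᵥ ((fun j => relu ((W *ᵥ h) j)) - fun j => relu ((W *ᵥ h') j))| := by
        rw [mulVec_sub]; abel_nf
    _ ≤ |h - h'| + U.map abs *ᵥ |(fun j => relu ((W *ᵥ h) j)) - fun j => relu ((W *ᵥ h') j)| :=
        (abs_add_le _ _).trans (add_le_add_right (abs_mulVec_le _ _) _)
    _ ≤ |h - h'| + U.map abs *ᵥ (W.map abs *ᵥ |h - h'|) := by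
        gcongr
        refine mulVec_mono_of_nonneg (fun _ _ => abs_nonneg _) ((abs_relu_sub_relu_le _ _).trans ?_)
        rw [← mulVec_sub]
        exact abs_mulVec_le _ _
    _ = _ := by rw [add_mulVec, one_mulVec, mulVec_mulVec]

namespace ResNet

open Matrix

variable {d m D L : ℕ}

theorem pathMat_nonneg (θ : ResNet d m D L) (l : ℕ) (i : Fin D) (j : Fin d) :
    0 ≤ θ.pathMat l i j := by
  induction l generalizing i with
  | zero => exact abs_nonneg _
  | succ l ih =>
    rw [pathMat]
    split_ifs with h
    · rw [mul_apply]
      exact Finset.sum_nonneg fun p _ => mul_nonneg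
        (one_add_smul_apply_nonneg (map_abs_mul_map_abs_nonneg _ _) (by norm_num) i p) (ih p)
    · exact ih i

theorem abs_hidden_sub_le (θ : ResNet d m D L) (x y : Fin d → ℝ) (l : ℕ) :
    |θ.hidden x l - θ.hidden y l| ≤ θ.pathMat l *ᵥ |x - y| := by
  induction l with
  | zero =>
    rw [hidden, hidden, pathMat, ← mulVec_sub]
    exact abs_mulVec_le _ _
  | succ l ih =>
    rw [hidden, hidden, pathMat]
    split_ifs with h
    · set A := (θ.Umat ⟨l, h⟩).map abs * (θ.W ⟨l, h⟩).map abs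
      have hA : ∀ i j, 0 ≤ A i j := map_abs_mul_map_abs_nonneg _ _
      calc _ ≤ (1 + A) *ᵥ |θ.hidden x l - θ.hidden y l| := abs_residualBlock_sub_le _ _ _ _
        _ ≤ (1 + (3 : ℝ) • A) *ᵥ |θ.hidden x l - θ.hidden y l| := by
          rw [add_mulVec, add_mulVec, smul_mulVec]
          have hAv : 0 ≤ A *ᵥ |θ.hidden x l - θ.hidden y l| :=
            fun i => dotProduct_nonneg_of_nonneg (hA i) (abs_nonneg _)
          gcongr
          exact le_smul_of_one_le_left hAv (by norm_num)
        _ ≤ (1 + (3 : ℝ) • A) *ᵥ (θ.pathMat l *ᵥ |x - y|) :=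
          mulVec_mono_of_nonneg (one_add_smul_apply_nonneg hA (by norm_num)) ih
        _ = _ := mulVec_mulVec _ _ _
    · exact ih

theorem pathNorm_nonneg (θ : ResNet d m D L) : 0 ≤ θ.pathNorm :=
  Finset.sum_nonneg fun j _ =>
    dotProduct_nonneg_of_nonneg (fun i => abs_nonneg (θ.u i)) fun i => θ.pathMat_nonneg L i j

theorem abs_apply_sub_le (θ : ResNet d m D L) (x y : Fin d → ℝ) :
    |θ.apply x - θ.apply y| ≤ θ.pathNorm * ‖x - y‖ := by
  have hP : 0 ≤ |θ.u| ᵥ* θ.pathMat L := fun j =>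
    dotProduct_nonneg_of_nonneg (abs_nonneg θ.u) fun i => θ.pathMat_nonneg L i j
  calc |θ.apply x - θ.apply y| = |θ.u ⬝ᵥ (θ.hidden x L - θ.hidden y L)| := by
        rw [dotProduct_sub]; rfl
    _ ≤ |θ.u| ⬝ᵥ (θ.pathMat L *ᵥ |x - y|) := (abs_dotProduct_le _ _).trans
        (dotProduct_le_dotProduct_of_nonneg_left (θ.abs_hidden_sub_le x y L) (abs_nonneg _))
    _ = (|θ.u| ᵥ* θ.pathMat L) ⬝ᵥ |x - y| := dotProduct_mulVec _ _ _
    _ ≤ (|θ.u| ᵥ* θ.pathMat L) ⬝ᵥ fun _ => ‖x - y‖ :=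
        dotProduct_le_dotProduct_of_nonneg_left (fun j => norm_le_pi_norm (x - y) j) hP
    _ = θ.pathNorm * ‖x - y‖ := by
        rw [pathNorm, Finset.sum_mul]; rfl

theorem continuous_apply (θ : ResNet d m D L) : Continuous θ.apply :=
  (LipschitzWith.of_dist_le_mul (K := ⟨θ.pathNorm, θ.pathNorm_nonneg⟩) fun x y => by
    rw [dist_eq_norm, dist_eq_norm, Real.norm_eq_abs]; exact θ.abs_apply_sub_le x y).continuous

end ResNet

theorem abs_ciSup_sub_ciSup_le {ι : Type*} [Finite ι] [Nonempty ι] {f g : ι → ℝ} {C : ℝ}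
    (h : ∀ i, |f i - g i| ≤ C) : |(⨆ i, f i) - ⨆ i, g i| ≤ C := by
  have one_sided : ∀ f g : ι → ℝ, (∀ i, f i - g i ≤ C) → (⨆ i, f i) - ⨆ i, g i ≤ C :=
    fun f g h => sub_le_iff_le_add.2 <| ciSup_le fun i => by
      linarith [h i, le_ciSup (Finite.bddAbove_range g) i]
  exact abs_sub_le_iff.2 ⟨one_sided f g fun i => (abs_sub_le_iff.1 (h i)).1,
    one_sided g f fun i => (abs_sub_le_iff.1 (h i)).2⟩

theorem integral_sq_le_two_mul_integral_sq_add {α : Type*} [MeasurableSpace α] {μ : Measure α}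
    [IsProbabilityMeasure μ] {f g : α → ℝ} {B : ℝ} (hg : Integrable (fun x => g x ^ 2) μ)
    (hfg : ∀ᵐ x ∂μ, |f x - g x| ≤ B) :
    ∫ x, f x ^ 2 ∂μ ≤ 2 * ∫ x, g x ^ 2 ∂μ + 2 * B ^ 2 := by
  have hbound : Integrable (fun x => 2 * g x ^ 2 + 2 * B ^ 2) μ :=
    (hg.const_mul 2).add (integrable_const _)
  have hpt : ∀ᵐ x ∂μ, f x ^ 2 ≤ 2 * g x ^ 2 + 2 * B ^ 2 := hfg.mono fun x hx => by
    have : (f x - g x) ^ 2 ≤ B ^ 2 := sq_le_sq' (abs_le.1 hx).1 (abs_le.1 hx).2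
    nlinarith [sq_nonneg (f x - 2 * g x)]
  by_cases hf : Integrable (fun x => f x ^ 2) μ
  · calc ∫ x, f x ^ 2 ∂μ ≤ ∫ x, 2 * g x ^ 2 + 2 * B ^ 2 ∂μ := integral_mono_ae hf hbound hpt
      _ = _ := by
        rw [integral_add (hg.const_mul 2) (integrable_const _), integral_const_mul,
          integral_const, probReal_univ, one_smul]
  · rw [integral_undef hf]
    have : 0 ≤ ∫ x, g x ^ 2 ∂μ := integral_nonneg fun x => sq_nonneg (g x)
    positivity

section Family

variable {d m D L k : ℕ}

theorem pathNorm_le_pathNormFam (Θ : Fin k → ResNet d m D L) (a : Fin k) :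
    (Θ a).pathNorm ≤ pathNormFam Θ :=
  Finset.single_le_sum (fun a' _ => (Θ a').pathNorm_nonneg) (Finset.mem_univ a)

theorem pathNormFam_nonneg (Θ : Fin k → ResNet d m D L) : 0 ≤ pathNormFam Θ :=
  Finset.sum_nonneg fun a _ => (Θ a).pathNorm_nonneg

theorem abs_iSup_apply_sub_le [NeZero k] (Θ : Fin k → ResNet d m D L) (x y : Fin d → ℝ) :
    |(⨆ a, (Θ a).apply x) - ⨆ a, (Θ a).apply y| ≤ pathNormFam Θ * ‖x - y‖ :=
  abs_ciSup_sub_ciSup_le fun a => ((Θ a).abs_apply_sub_le x y).trans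
    (mul_le_mul_of_nonneg_right (pathNorm_le_pathNormFam Θ a) (norm_nonneg _))

theorem continuous_iSup_apply [NeZero k] (Θ : Fin k → ResNet d m D L) :
    Continuous fun x => ⨆ a, (Θ a).apply x :=
  (LipschitzWith.of_dist_le' fun x y => by
    rw [dist_eq_norm, dist_eq_norm, Real.norm_eq_abs]; exact abs_iSup_apply_sub_le Θ x y).continuous

def bellmanResidual (γ : ℝ) (r : (Fin d → ℝ) → Fin k → ℝ)
    (next : (Fin d → ℝ) → Fin k → (Fin d → ℝ)) (Θ : Fin k → ResNet d m D L)
    (s : Fin d → ℝ) (a : Fin k) : ℝ :=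
  (Θ a).apply s - r s a - γ * ⨆ a', (Θ a').apply (next s a)

theorem bellmanLoss_eq (γ : ℝ) (μ : Measure (Fin d → ℝ)) (r : (Fin d → ℝ) → Fin k → ℝ)
    (next : (Fin d → ℝ) → Fin k → (Fin d → ℝ)) (Θ : Fin k → ResNet d m D L) :
    bellmanLoss k γ μ r next Θ
      = 1 / (2 * (k : ℝ)) * ∑ a, ∫ s, bellmanResidual γ r next Θ s a ^ 2 ∂μ :=
  rfl

theorem abs_bellmanResidual_sub_le [NeZero k] {γ : ℝ} (hγ : 0 ≤ γ) (r : (Fin d → ℝ) → Fin k → ℝ)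
    (next : (Fin d → ℝ) → Fin k → (Fin d → ℝ)) (Θ : Fin k → ResNet d m D L)
    (s : Fin d → ℝ) (a : Fin k) :
    |bellmanResidual γ r next Θ s a - bellmanResidual γ r (fun s _ => s) Θ s a|
      ≤ γ * pathNormFam Θ * ‖s - next s a‖ := by
  have hdiff : bellmanResidual γ r next Θ s a - bellmanResidual γ r (fun s _ => s) Θ s a
      = γ * ((⨆ a', (Θ a').apply s) - ⨆ a', (Θ a').apply (next s a)) := by
    simp only [bellmanResidual]; ring
  rw [hdiff, abs_mul, abs_of_nonneg hγ, mul_assoc]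
  exact mul_le_mul_of_nonneg_left (abs_iSup_apply_sub_le Θ _ _) hγ

theorem integrable_bellmanResidual_self_sq [NeZero k] {S : Set (Fin d → ℝ)}
    (hS : Bornology.IsBounded S) {μ : Measure (Fin d → ℝ)} [IsFiniteMeasure μ] (hμS : μ Sᶜ = 0)
    (γ : ℝ) {r : (Fin d → ℝ) → Fin k → ℝ} (hr : ∀ a, Measurable fun s => r s a)
    (hrbdd : ∃ C : ℝ, ∀ s ∈ S, ∀ a, |r s a| ≤ C) (Θ : Fin k → ResNet d m D L) (a : Fin k) :
    Integrable (fun s => bellmanResidual γ r (fun s _ => s) Θ s a ^ 2) μ := by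
  obtain ⟨Cr, hCr⟩ := hrbdd
  have hN : Continuous fun s => (Θ a).apply s - γ * ⨆ a', (Θ a').apply s :=
    (Θ a).continuous_apply.sub (continuous_const.mul (continuous_iSup_apply Θ))
  obtain ⟨CN, hCN⟩ := hS.isCompact_closure.exists_bound_of_continuousOn hN.continuousOn
  refine MemLp.integrable_sq (MemLp.of_bound ?_ (CN + Cr) ?_)
  · exact (((Θ a).continuous_apply.measurable.sub (hr a)).sub
      (continuous_const.mul (continuous_iSup_apply Θ)).measurable).aestronglyMeasurable
  · filter_upwards [mem_ae_iff.2 hμS] with s hs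
    calc ‖bellmanResidual γ r (fun s _ => s) Θ s a‖
        = |((Θ a).apply s - γ * ⨆ a', (Θ a').apply s) - r s a| := by
          rw [Real.norm_eq_abs, bellmanResidual]; ring_nf
      _ ≤ CN + Cr := (abs_sub _ _).trans (add_le_add (hCN s (subset_closure hs)) (hCr s hs a))

end Family

theorem bellman_optimal_le_effective_general {d m Dh L k : ℕ} (hk : 0 < k)
    {S : Set (Fin d → ℝ)} (hS : S ⊆ Set.Icc (0 : Fin d → ℝ) 1)
    {γ Δt : ℝ} (hγ : γ ∈ Set.Ioo (0 : ℝ) 1) (hΔt : Δt ∈ Set.Ioo (0 : ℝ) 1)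
    (gt : (Fin d → ℝ) → Fin k → ℝ → (Fin d → ℝ))
    (hzero : ∀ s ∈ S, ∀ a, gt s a 0 = s)
    {CT : ℝ}
    (hlip : ∀ s ∈ S, ∀ a, ∀ t : ℝ, 0 ≤ t → ∀ Δ ∈ Set.Ioo (0 : ℝ) 1,
      ‖gt s a t - gt s a (t + Δ)‖ ≤ CT * Δ)
    (r : (Fin d → ℝ) → Fin k → ℝ)
    (hrmeas : ∀ a, Measurable fun s => r s a)
    (hrbdd : ∃ C : ℝ, ∀ s ∈ S, ∀ a, |r s a| ≤ C)
    (μ : Measure (Fin d → ℝ)) [IsProbabilityMeasure μ] (hμS : μ Sᶜ = 0)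
    (Θ : Fin k → ResNet d m Dh L) :
    bellmanLoss k γ μ r (fun s a => gt s a Δt) Θ
      ≤ 2 * bellmanLoss k γ μ r (fun s _ => s) Θ
        + γ ^ 2 * CT ^ 2 * Δt ^ 2 * (pathNormFam Θ) ^ 2 := by
  have : NeZero k := ⟨hk.ne'⟩
  set B := γ * pathNormFam Θ * (CT * Δt)
  have hstep : ∀ a, ∫ s, bellmanResidual γ r (fun s a => gt s a Δt) Θ s a ^ 2 ∂μ
      ≤ 2 * ∫ s, bellmanResidual γ r (fun s _ => s) Θ s a ^ 2 ∂μ + 2 * B ^ 2 := fun a =>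
    integral_sq_le_two_mul_integral_sq_add
      (integrable_bellmanResidual_self_sq ((Metric.isBounded_Icc 0 1).subset hS) hμS γ hrmeas
        hrbdd Θ a) <| by
      filter_upwards [mem_ae_iff.2 hμS] with s hs
      refine (abs_bellmanResidual_sub_le hγ.1.le r _ Θ s a).trans
        (mul_le_mul_of_nonneg_left ?_ (mul_nonneg hγ.1.le (pathNormFam_nonneg Θ)))
      simpa [hzero s hs a] using hlip s hs a 0 le_rfl Δt hΔt
  have hk' : (k : ℝ) ≠ 0 := Nat.cast_ne_zero.2 hk.ne'
  calc bellmanLoss k γ μ r (fun s a => gt s a Δt) Θ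
      ≤ 1 / (2 * (k : ℝ)) * ∑ a : Fin k,
          (2 * ∫ s, bellmanResidual γ r (fun s _ => s) Θ s a ^ 2 ∂μ + 2 * B ^ 2) := by
        rw [bellmanLoss_eq]; gcongr with a; exact hstep a
    _ = 2 * bellmanLoss k γ μ r (fun s _ => s) Θ + B ^ 2 := by
        rw [bellmanLoss_eq, Finset.sum_add_distrib, ← Finset.mul_sum, Finset.sum_const,
          Finset.card_univ, Fintype.card_fin, nsmul_eq_mul]
        field_simp
    _ = _ := by ring

/-- the Bellman optimal loss is controlled by the Bellman effective loss:
`R_D(Θ) ≤ 2 R̃_D(Θ) + γ² C_T² (Δt)² ‖Θ‖_P²`.  The action set is `Fin k` with `k > 0`,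
and the norm on `Fin d → ℝ` is the sup (`ℓ∞`) norm. -/
theorem bellman_optimal_le_effective {d m Dh L k : ℕ} (hk : 0 < k)
    {S : Set (Fin d → ℝ)} (hS : S ⊆ Set.Icc (0 : Fin d → ℝ) 1)
    {γ Δt : ℝ} (hγ : γ ∈ Set.Ioo (0 : ℝ) 1) (hΔt : Δt ∈ Set.Ioo (0 : ℝ) 1)
    (gt : (Fin d → ℝ) → Fin k → ℝ → (Fin d → ℝ))
    (hzero : ∀ s ∈ S, ∀ a, gt s a 0 = s)
    {CT : ℝ} (hCT : 0 < CT)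
    (hlip : ∀ s ∈ S, ∀ a, ∀ t : ℝ, 0 ≤ t → ∀ Δ ∈ Set.Ioo (0 : ℝ) 1,
      ‖gt s a t - gt s a (t + Δ)‖ ≤ CT * Δ)
    (r : (Fin d → ℝ) → Fin k → ℝ)
    (hrmeas : ∀ a, Measurable fun s => r s a)
    (hrbdd : ∃ C : ℝ, ∀ s ∈ S, ∀ a, |r s a| ≤ C)
    (μ : Measure (Fin d → ℝ)) [IsProbabilityMeasure μ] (hμS : μ Sᶜ = 0)
    (Θ : Fin k → ResNet d m Dh L) :
    bellmanLoss k γ μ r (fun s a => gt s a Δt) Θ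
      ≤ 2 * bellmanLoss k γ μ r (fun s _ => s) Θ
        + γ ^ 2 * CT ^ 2 * Δt ^ 2 * (pathNormFam Θ) ^ 2 :=
  bellman_optimal_le_effective_general hk hS hγ hΔt gt hzero hlip r hrmeas hrbdd μ hμS Θ

end
end
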